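/- Let z = μ_z + w_z with μ_z a discrete random vector in ℝ^d and w_z ∼ N(0, Σ_z) independent of μ_z, Σ_z positive semidefinite. Then for every integer t ≥ 1 and every v ∈ ℝ^d: E⟨z, v⟩^(2t) ≥ E⟨μ_z, v⟩^(2t) + (vᵀΣ_z v)^t · t^t / 2^t. -/

import Mathlib

/-!
Write `X = ⟨μ_z, v⟩` and `Y = ⟨w_z, v⟩ ∼ N(0, vᵀΣv)`. Since `Y` is symmetric and independent of `X`,
the pairs `(X, Y)` and `(X, -Y)` have the same law, so `E(X+Y)^{2t} = E(X-Y)^{2t}`. Averaging the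
pointwise inequality `(a+b)^{2t} + (a-b)^{2t} ≥ 2a^{2t} + 2b^{2t}` gives
`E(X+Y)^{2t} ≥ EX^{2t} + EY^{2t}`, and `EY^{2t} = (vᵀΣv)^t (2t-1)!!` with `(2t-1)!! ≥ t^t / 2^t`.
-/

open MeasureTheory ProbabilityTheory Matrix
open Real
open scoped NNReal ENNReal Nat

/-- Integration by parts: the derivative of `x ^ (n + 1) * exp (-b * x ^ 2)` integrates to zero. -/
lemma integral_pow_add_two_mul_exp_neg_mul_sq {b : ℝ} (hb : 0 < b) (n : ℕ) :
    ∫ x : ℝ, x ^ (n + 2) * exp (-b * x ^ 2)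
      = (n + 1) / (2 * b) * ∫ x : ℝ, x ^ n * exp (-b * x ^ 2) := by
  have hint (k : ℕ) : Integrable fun x : ℝ ↦ x ^ k * exp (-b * x ^ 2) := by
    simpa using integrable_rpow_mul_exp_neg_mul_sq hb (s := k)
      (by linarith [k.cast_nonneg (α := ℝ)])
  have hderiv (x : ℝ) : HasDerivAt (fun x ↦ x ^ (n + 1) * exp (-b * x ^ 2))
      ((n + 1) * (x ^ n * exp (-b * x ^ 2)) - 2 * b * (x ^ (n + 2) * exp (-b * x ^ 2))) x := by
    have hpow : HasDerivAt (fun x : ℝ ↦ x ^ (n + 1)) ((n + 1) * x ^ n) x := by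
      simpa using hasDerivAt_pow (n + 1) x
    have hexp : HasDerivAt (fun x ↦ exp (-b * x ^ 2)) (exp (-b * x ^ 2) * (-b * (2 * x))) x := by
      simpa using ((hasDerivAt_pow 2 x).const_mul (-b)).exp
    exact (hpow.fun_mul hexp).congr_deriv (by ring)
  have h := integral_eq_zero_of_hasDerivAt_of_integrable hderiv
    (((hint n).const_mul _).sub ((hint (n + 2)).const_mul _)) (hint (n + 1))
  rw [integral_sub ((hint n).const_mul _) ((hint (n + 2)).const_mul _), integral_const_mul,
    integral_const_mul, sub_eq_zero] at h
  rw [div_mul_eq_mul_div, eq_div_iff (by positivity)]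
  linarith

lemma integral_pow_add_two_gaussianReal (V : ℝ≥0) (n : ℕ) :
    ∫ x, x ^ (n + 2) ∂gaussianReal 0 V = (n + 1) * V * ∫ x, x ^ n ∂gaussianReal 0 V := by
  rcases eq_or_ne V 0 with rfl | hV
  · simp
  have hb : 0 < (2 * (V : ℝ))⁻¹ := by positivity
  have hpdf (k : ℕ) : ∫ x, x ^ k ∂gaussianReal 0 V
      = (√(2 * π * V))⁻¹ * ∫ x, x ^ k * exp (-(2 * (V : ℝ))⁻¹ * x ^ 2) := by
    rw [integral_gaussianReal_eq_integral_smul hV, ← integral_const_mul]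
    congr 1 with x
    simp only [gaussianPDFReal, smul_eq_mul, sub_zero]
    ring_nf
  rw [hpdf, hpdf, integral_pow_add_two_mul_exp_neg_mul_sq hb]
  field_simp

lemma integral_pow_two_mul_gaussianReal (V : ℝ≥0) (t : ℕ) :
    ∫ x, x ^ (2 * t) ∂gaussianReal 0 V = V ^ t * (2 * t - 1)‼ := by
  induction t with
  | zero => simp
  | succ s ih =>
    rw [mul_add_one, integral_pow_add_two_gaussianReal, ih,
      show 2 * s + 2 - 1 = 2 * s + 1 by omega, Nat.doubleFactorial_add_one]
    rcases s with _ | s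
    · simp
    · rw [show 2 * (s + 1) - 1 = 2 * s + 1 by omega]
      push_cast
      ring

lemma Nat.factorial_two_mul (t : ℕ) : (2 * t)! = 2 ^ t * t ! * (2 * t - 1)‼ := by
  rcases t with _ | s
  · rfl
  · rw [← Nat.doubleFactorial_two_mul, show 2 * (s + 1) - 1 = 2 * s + 1 by omega,
      show 2 * (s + 1) = 2 * s + 1 + 1 by omega, Nat.factorial_eq_mul_doubleFactorial]

lemma Nat.pow_self_le_two_pow_mul_doubleFactorial (t : ℕ) : t ^ t ≤ 2 ^ t * (2 * t - 1)‼ := by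
  refine Nat.le_of_mul_le_mul_left ?_ t.factorial_pos
  calc t ! * t ^ t ≤ t ! * (t + 1) ^ t := by gcongr; omega
    _ ≤ (t + t)! := Nat.factorial_mul_pow_le_factorial
    _ = t ! * (2 ^ t * (2 * t - 1)‼) := by rw [← two_mul, Nat.factorial_two_mul]; ring

lemma mul_div_two_pow_le_integral_pow_two_mul_gaussianReal (V : ℝ≥0) (t : ℕ) :
    (V : ℝ) ^ t * t ^ t / 2 ^ t ≤ ∫ x, x ^ (2 * t) ∂gaussianReal 0 V := by
  have h : (t : ℝ) ^ t ≤ 2 ^ t * (2 * t - 1)‼ :=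
    mod_cast Nat.pow_self_le_two_pow_mul_doubleFactorial t
  rw [integral_pow_two_mul_gaussianReal, mul_div_assoc]
  gcongr
  rw [div_le_iff₀ (by positivity)]
  linarith

/-- With `A = a ^ 2`, `B = b ^ 2`: `2 (A ^ t + B ^ t) ≤ 2 (A + B) ^ t` by superadditivity, and
`2 ^ t (A + B) ^ t ≤ 2 ^ (t - 1) ((a + b) ^ 2t + (a - b) ^ 2t)` by convexity of `x ↦ x ^ t`. -/
lemma two_mul_add_le_add_pow_add_sub_pow (a b : ℝ) {t : ℕ} (ht : t ≠ 0) :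
    2 * (a ^ (2 * t) + b ^ (2 * t)) ≤ (a + b) ^ (2 * t) + (a - b) ^ (2 * t) := by
  have hsuper := pow_add_pow_le (sq_nonneg a) (sq_nonneg b) ht
  have hconv := add_pow_le (sq_nonneg (a + b)) (sq_nonneg (a - b)) t
  have hsum : (a + b) ^ 2 + (a - b) ^ 2 = 2 * (a ^ 2 + b ^ 2) := by ring
  rw [hsum, mul_pow, ← pow_sub_one_mul ht] at hconv
  simp only [pow_mul] at *
  nlinarith [pow_pos (two_pos (α := ℝ)) (t - 1)]

section Symmetrization

variable {Ω : Type*} [MeasurableSpace Ω] {P : Measure Ω} [IsFiniteMeasure P]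

lemma ProbabilityTheory.IndepFun.identDistrib_prodMk {α β : Type*} [MeasurableSpace α]
    [MeasurableSpace β] {X : Ω → α} {Y Y' : Ω → β} (hX : AEMeasurable X P) (hXY : IndepFun X Y P)
    (hXY' : IndepFun X Y' P) (hYY' : IdentDistrib Y Y' P P) :
    IdentDistrib (fun ω ↦ (X ω, Y ω)) (fun ω ↦ (X ω, Y' ω)) P P where
  aemeasurable_fst := hX.prodMk hYY'.aemeasurable_fst
  aemeasurable_snd := hX.prodMk hYY'.aemeasurable_snd
  map_eq := by
    rw [(indepFun_iff_map_prod_eq_prod_map_map hX hYY'.aemeasurable_fst).mp hXY,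
      (indepFun_iff_map_prod_eq_prod_map_map hX hYY'.aemeasurable_snd).mp hXY', hYY'.map_eq]

lemma integral_pow_add_integral_pow_le_integral_add_pow {X Y : Ω → ℝ} {t : ℕ} (ht : t ≠ 0)
    (hX : MemLp X (2 * t : ℕ) P) (hY : MemLp Y (2 * t : ℕ) P) (hXY : IndepFun X Y P)
    (hYsymm : IdentDistrib Y (-Y) P P) :
    ∫ ω, X ω ^ (2 * t) ∂P + ∫ ω, Y ω ^ (2 * t) ∂P ≤ ∫ ω, (X ω + Y ω) ^ (2 * t) ∂P := by
  have hint {Z : Ω → ℝ} (hZ : MemLp Z (2 * t : ℕ) P) : Integrable (fun ω ↦ Z ω ^ (2 * t)) P := by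
    simpa only [Real.norm_eq_abs, (even_two_mul t).pow_abs] using
      hZ.integrable_norm_pow (by omega)
  have hreflect : ∫ ω, (X ω + Y ω) ^ (2 * t) ∂P = ∫ ω, (X ω - Y ω) ^ (2 * t) ∂P := by
    have hpair := hXY.identDistrib_prodMk hX.aemeasurable
      (hXY.comp measurable_id measurable_neg) hYsymm
    simpa [sub_eq_add_neg] using
      (hpair.comp (u := fun p : ℝ × ℝ ↦ (p.1 + p.2) ^ (2 * t)) (by fun_prop)).integral_eq
  have hXint := hint hX
  have hYint := hint hY
  have hsum : Integrable (fun ω ↦ (X ω + Y ω) ^ (2 * t)) P := hint (hX.add hY)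
  have hdiff : Integrable (fun ω ↦ (X ω - Y ω) ^ (2 * t)) P := hint (hX.sub hY)
  have hmono : ∫ ω, 2 * (X ω ^ (2 * t) + Y ω ^ (2 * t)) ∂P
      ≤ ∫ ω, ((X ω + Y ω) ^ (2 * t) + (X ω - Y ω) ^ (2 * t)) ∂P :=
    integral_mono ((hXint.add hYint).const_mul 2) (hsum.add hdiff)
      fun ω ↦ two_mul_add_le_add_pow_add_sub_pow (X ω) (Y ω) ht
  rw [integral_const_mul, integral_add hXint hYint, integral_add hsum hdiff, ← hreflect] at hmono
  linarith

end Symmetrization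

lemma memLp_of_finite_range {Ω E : Type*} [MeasurableSpace Ω] [NormedAddCommGroup E]
    {P : Measure Ω} [IsFiniteMeasure P] {f : Ω → E} (hf : AEStronglyMeasurable f P)
    (hfin : (Set.range f).Finite) (p : ℝ≥0∞) : MemLp f p P := by
  obtain ⟨C, hC⟩ := (hfin.image norm).bddAbove
  exact MemLp.of_bound hf C (ae_of_all _ fun ω ↦ hC ⟨f ω, ⟨ω, rfl⟩, rfl⟩)

/-- Moment lower bound: `z = μ_z + w_z` with `μ_z` a discrete random vector in `ℝ^d`
and `w_z ∼ N(0, Σ_z)` independent of `μ_z`, `Σ_z` PSD. For every `t ≥ 1` and `v`: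
`E⟨z, v⟩^(2t) ≥ E⟨μ_z, v⟩^(2t) + (vᵀ Σ_z v)^t t^t / 2^t`. -/
theorem stmt12 {Ω : Type*} [MeasurableSpace Ω] (P : Measure Ω) [IsProbabilityMeasure P]
    {d k : ℕ} (S : Matrix (Fin d) (Fin d) ℝ) (hS : S.PosSemidef)
    (μRV wRV : Ω → (Fin d → ℝ))
    (hμmeas : Measurable μRV) (hwmeas : Measurable wRV)
    (m : Fin k → (Fin d → ℝ)) (hrange : ∀ ω, ∃ j, μRV ω = m j)
    (hindep : IndepFun μRV wRV P)
    (hgauss : ∀ v : Fin d → ℝ,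
      Measure.map (fun ω => wRV ω ⬝ᵥ v) P
        = gaussianReal 0 (Real.toNNReal (v ⬝ᵥ S.mulVec v)))
    (t : ℕ) (ht : 1 ≤ t) (v : Fin d → ℝ) :
    (∫ ω, (μRV ω ⬝ᵥ v) ^ (2 * t) ∂P) + (v ⬝ᵥ S.mulVec v) ^ t * (t : ℝ) ^ t / 2 ^ t
      ≤ ∫ ω, ((μRV ω + wRV ω) ⬝ᵥ v) ^ (2 * t) ∂P := by
  have hdot : Measurable fun w : Fin d → ℝ ↦ w ⬝ᵥ v := by fun_prop
  set X := fun ω ↦ μRV ω ⬝ᵥ v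
  set Y := fun ω ↦ wRV ω ⬝ᵥ v
  set σ := (v ⬝ᵥ S.mulVec v).toNNReal
  have hσ : (σ : ℝ) = v ⬝ᵥ S.mulVec v := Real.coe_toNNReal _ (hS.dotProduct_mulVec_nonneg v)
  have hY : HasLaw Y (gaussianReal 0 σ) P := ⟨(hdot.comp hwmeas).aemeasurable, hgauss v⟩
  have hXmem : MemLp X (2 * t : ℕ) P := by
    refine memLp_of_finite_range (hdot.comp hμmeas).aestronglyMeasurable
      ((Set.finite_range fun j ↦ m j ⬝ᵥ v).subset ?_) _
    rintro _ ⟨ω, rfl⟩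
    obtain ⟨j, hj⟩ := hrange ω
    exact ⟨j, by simp [hj]⟩
  have hYmem : MemLp Y (2 * t : ℕ) P :=
    (memLp_map_measure_iff aestronglyMeasurable_id hY.aemeasurable).mp
      (hY.map_eq ▸ memLp_id_gaussianReal' _ (ENNReal.natCast_ne_top _))
  have hYsymm : IdentDistrib Y (-Y) P P := hY.identDistrib (by simpa using gaussianReal_neg hY)
  have hYmoment : ∫ ω, Y ω ^ (2 * t) ∂P = ∫ x, x ^ (2 * t) ∂gaussianReal 0 σ :=
    hY.integral_comp (f := fun x ↦ x ^ (2 * t)) (by fun_prop)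
  calc (∫ ω, X ω ^ (2 * t) ∂P) + (v ⬝ᵥ S.mulVec v) ^ t * (t : ℝ) ^ t / 2 ^ t
      ≤ ∫ ω, X ω ^ (2 * t) ∂P + ∫ ω, Y ω ^ (2 * t) ∂P := by
        rw [hYmoment, ← hσ]
        gcongr
        exact mul_div_two_pow_le_integral_pow_two_mul_gaussianReal σ t
    _ ≤ ∫ ω, (X ω + Y ω) ^ (2 * t) ∂P :=
        integral_pow_add_integral_pow_le_integral_add_pow (by omega) hXmem hYmem
          (hindep.comp hdot hdot) hYsymm
    _ = ∫ ω, ((μRV ω + wRV ω) ⬝ᵥ v) ^ (2 * t) ∂P := by simp only [X, Y, add_dotProduct]
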